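/- arXiv:1610.05964 — 6 statements merged into one kernel-verified Lean document; each statement's English description precedes it below -/
import Mathlib

section
/- Let I be a countable index set, z : I → ℝ^d a family of points, and L : I → [1,∞) a family of weights, and suppose there is a constant c₁ > 0 such that |z_i − z_j| > c₁/√(L_i·L_j) whenever z_i ≠ z_j. Then a point ξ ∈ ℝ^d is singular (for this family, in the parabolic sense) if and only if ξ = z_i for some i ∈ I. -/
/-!
Fix `ε = c₁ / 4` and let `z_N` be the point that approximates `ξ` at scale `N`. If two of
these points at scales `N ≤ M ≤ 9 N` were distinct, the triangle inequality through `ξ` would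
put them at distance less than `c₁ / √(L_i L_j)`, against the separation. So `z_N` does not
change on any interval `[N, 9 N]`, hence is a single point `z_i`, and then
`dist ξ z_i < ε / √N → 0` forces `ξ = z_i`. Conversely `ξ = z_i` is approximated by `z_i` itself
at every scale `N > L_i`.
-/

open Filter Topology

theorem eq_of_forall_eq_of_le_of_le_mul {α : Type*} {f : ℝ → α} {a r : ℝ} (ha : 0 < a)
    (hr : 1 < r) (hf : ∀ N M, a ≤ N → N ≤ M → M ≤ r * N → f N = f M) {N : ℝ} (hN : a ≤ N) :
    f N = f a := by
  obtain ⟨k, hk⟩ := pow_unbounded_of_one_lt (N / a) hr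
  replace hk : N ≤ r ^ k * a := ((div_lt_iff₀ ha).1 hk).le
  induction k generalizing N with
  | zero => rw [pow_zero, one_mul] at hk; rw [le_antisymm hk hN]
  | succ k ih =>
    set M := max a (N / r)
    have hr₀ : 0 < r := zero_lt_one.trans hr
    have haM : a ≤ M := le_max_left _ _
    have hMN : M ≤ N := max_le hN (div_le_self (ha.le.trans hN) hr.le)
    have hNM : N ≤ r * M := by
      rw [← div_le_iff₀' hr₀]; exact le_max_right _ _
    have hMk : M ≤ r ^ k * a := by
      refine max_le (le_mul_of_one_le_left ha.le (one_le_pow₀ hr.le)) ?_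
      rw [div_le_iff₀' hr₀, ← mul_assoc, ← pow_succ']; exact hk
    rw [← ih haM hMk, hf M N haM hMN hNM]

theorem eq_of_dist_lt_div_sqrt_of_separated {X I : Type*} [PseudoMetricSpace X] {z : I → X}
    {L : I → ℝ} {c : ℝ} (hc : 0 < c)
    (hsep : ∀ i j, z i ≠ z j → c / √(L i * L j) < dist (z i) (z j)) {ξ : X} {i j : I}
    {N M : ℝ} (hLi₀ : 0 < L i) (hLj₀ : 0 < L j)
    (hi : dist ξ (z i) < c / 4 / √(L i * N)) (hLi : L i < N)
    (hj : dist ξ (z j) < c / 4 / √(L j * M)) (hLj : L j < M)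
    (hNM : N ≤ M) (hMN : M ≤ 9 * N) : z i = z j := by
  by_contra hne
  set s := √(L i * L j)
  have hs : 0 < s := Real.sqrt_pos.2 (mul_pos hLi₀ hLj₀)
  have hsi : s ≤ 3 * √(L i * N) := by
    rw [show (3 : ℝ) = √(3 ^ 2) by simp, ← Real.sqrt_mul (by positivity)]
    exact Real.sqrt_le_sqrt (by nlinarith)
  have hsj : s ≤ √(L j * M) := Real.sqrt_le_sqrt (by nlinarith)
  have hi' : c / 4 / √(L i * N) ≤ 3 * (c / 4) / s := by
    rw [← mul_div_mul_left (c / 4) _ three_ne_zero]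
    exact div_le_div_of_nonneg_left (by positivity) hs hsi
  have hj' : c / 4 / √(L j * M) ≤ c / 4 / s := div_le_div_of_nonneg_left (by positivity) hs hsj
  have hsum : 3 * (c / 4) / s + c / 4 / s = c / s := by ring
  linarith [hsep i j hne, dist_triangle_left (z i) (z j) ξ]

theorem singular_parabolic_iff_mem_orbit_general {d : ℕ} {I : Type*}
    (z : I → EuclideanSpace ℝ (Fin d)) (L : I → ℝ) (hL : ∀ i, 1 ≤ L i)
    (c₁ : ℝ) (hc₁ : 0 < c₁)
    (hsep : ∀ i j, z i ≠ z j → c₁ / Real.sqrt (L i * L j) < dist (z i) (z j))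
    (ξ : EuclideanSpace ℝ (Fin d)) :
    (∀ ε : ℝ, 0 < ε → ∃ N₀ : ℝ, 1 < N₀ ∧ ∀ N : ℝ, N₀ ≤ N →
        ∃ i : I, dist ξ (z i) < ε / Real.sqrt (L i * N) ∧ L i < N)
      ↔ ∃ i : I, ξ = z i := by
  have hL₀ i : 0 < L i := zero_lt_one.trans_le (hL i)
  refine ⟨fun h => ?_, ?_⟩
  · obtain ⟨N₀, hN₀, happrox⟩ := h (c₁ / 4) (by positivity)
    have : ∀ N, ∃ i, N₀ ≤ N → dist ξ (z i) < c₁ / 4 / √(L i * N) ∧ L i < N := fun N => by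
      by_cases hN : N₀ ≤ N
      · exact (happrox N hN).imp fun _ hi _ => hi
      · exact (happrox N₀ le_rfl).imp fun _ _ hN' => absurd hN' hN
    choose i hi using this
    have hconst N (hN : N₀ ≤ N) : z (i N) = z (i N₀) :=
      eq_of_forall_eq_of_le_of_le_mul (zero_lt_one.trans hN₀) (by norm_num : (1 : ℝ) < 9)
        (fun N M hN hNM hMN => eq_of_dist_lt_div_sqrt_of_separated hc₁ hsep (hL₀ _) (hL₀ _)
          (hi N hN).1 (hi N hN).2 (hi M (hN.trans hNM)).1 (hi M (hN.trans hNM)).2 hNM hMN) hN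
    have hlim : Tendsto (fun N => c₁ / 4 / √N) atTop (𝓝 0) :=
      tendsto_const_nhds.div_atTop Real.tendsto_sqrt_atTop
    refine ⟨i N₀, dist_le_zero.1 (ge_of_tendsto hlim ?_)⟩
    filter_upwards [eventually_ge_atTop N₀] with N hN
    rw [← hconst N hN]
    refine (hi N hN).1.le.trans (div_le_div_of_nonneg_left (by positivity) ?_ ?_)
    · exact Real.sqrt_pos.2 (zero_lt_one.trans (hN₀.trans_le hN))
    · exact Real.sqrt_le_sqrt (le_mul_of_one_le_left (by linarith) (hL _))
  · rintro ⟨i, rfl⟩ ε hε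
    refine ⟨L i + 1, by linarith [hL i], fun N hN => ⟨i, ?_, by linarith⟩⟩
    have : 0 < L i * N := mul_pos (hL₀ i) (by linarith [hL₀ i])
    rw [dist_self]
    positivity

/-- Under the parabolic separation hypothesis
`dist (z i) (z j) > c₁ / √(L i * L j)` for distinct points, a point `ξ ∈ ℝ^d` is
singular in the parabolic sense iff it belongs to the family `z`. -/
theorem singular_parabolic_iff_mem_orbit {d : ℕ} {I : Type*} [Countable I]
    (z : I → EuclideanSpace ℝ (Fin d)) (L : I → ℝ) (hL : ∀ i, 1 ≤ L i)
    (c₁ : ℝ) (hc₁ : 0 < c₁)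
    (hsep : ∀ i j, z i ≠ z j → c₁ / Real.sqrt (L i * L j) < dist (z i) (z j))
    (ξ : EuclideanSpace ℝ (Fin d)) :
    (∀ ε : ℝ, 0 < ε → ∃ N₀ : ℝ, 1 < N₀ ∧ ∀ N : ℝ, N₀ ≤ N →
        ∃ i : I, dist ξ (z i) < ε / Real.sqrt (L i * N) ∧ L i < N)
      ↔ ∃ i : I, ξ = z i :=
  singular_parabolic_iff_mem_orbit_general z L hL c₁ hc₁ hsep ξ
end

section
/- Let I be a countable index set, z : I → ℝ^d a family of points, and L : I → [1,∞) a family of weights, and suppose there is a constant c₁ > 0 such that |z_i − z_j| > c₁/max(L_i, L_j) whenever z_i ≠ z_j. Then a point ξ ∈ ℝ^d is singular (for this family, in the hyperbolic sense) if and only if ξ = z_i for some i ∈ I. -/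
/-!
Take `ε = c₁ / 4`. Two witnesses `z i`, `z j` at comparable scales `N ≤ N' ≤ 2 N` lie within
`c₁ / (2 N) ≤ c₁ / N'` of each other while both weights are below `N'`, so the separation
hypothesis forces `z i = z j`. Chaining along the scales `2 ^ k * N₀` shows that every witness is
the same point `z i₀`, which is therefore closer to `ξ` than `c₁ / (4 * 2 ^ k * N₀)` for every `k`.
-/

open Filter Topology

section PseudoMetric

variable {α I : Type*} [PseudoMetricSpace α] (z : I → α) (L : I → ℝ)

def HyperbolicSingular (ξ : α) : Prop :=
  ∀ ε : ℝ, 0 < ε → ∃ N₀ : ℝ, 1 < N₀ ∧ ∀ N : ℝ, N₀ ≤ N →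
    ∃ i : I, dist ξ (z i) < ε / N ∧ L i < N

theorem hyperbolicSingular_apply_self (i : I) : HyperbolicSingular z L (z i) := by
  intro ε hε
  refine ⟨max 2 (L i + 1), by simp, fun N hN => ⟨i, ?_, ?_⟩⟩
  · have : 0 < N := by linarith [le_max_left 2 (L i + 1)]
    simpa using div_pos hε this
  · linarith [le_max_right 2 (L i + 1)]

variable {z L} {c₁ : ℝ}

theorem eq_of_dist_lt_of_le_two_mul (hL : ∀ i, 1 ≤ L i) (hc₁ : 0 < c₁)
    (hsep : ∀ i j, z i ≠ z j → c₁ / max (L i) (L j) < dist (z i) (z j))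
    {ξ : α} {N N' : ℝ} {i j : I} (hN : 0 < N) (hNN' : N ≤ N') (hN'N : N' ≤ 2 * N)
    (hi : dist ξ (z i) < c₁ / 4 / N) (hLi : L i < N)
    (hj : dist ξ (z j) < c₁ / 4 / N') (hLj : L j < N') : z i = z j := by
  by_contra hne
  have hmax : 0 < max (L i) (L j) := zero_lt_one.trans_le ((hL i).trans (le_max_left _ _))
  have hweights : c₁ / N' < c₁ / max (L i) (L j) :=
    div_lt_div_of_pos_left hc₁ hmax (max_lt (hLi.trans_le hNN') hLj)
  have hclose : dist (z i) (z j) < c₁ / N' := calc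
    dist (z i) (z j) ≤ dist ξ (z i) + dist ξ (z j) := dist_triangle_left _ _ _
    _ < c₁ / 4 / N + c₁ / 4 / N :=
      add_lt_add hi (hj.trans_le (div_le_div_of_nonneg_left (by positivity) hN hNN'))
    _ = c₁ / (2 * N) := by field_simp; ring
    _ ≤ c₁ / N' := div_le_div_of_nonneg_left hc₁.le (hN.trans_le hNN') hN'N
  linarith [hsep i j hne]

theorem HyperbolicSingular.exists_dist_eq_zero (hL : ∀ i, 1 ≤ L i) (hc₁ : 0 < c₁)
    (hsep : ∀ i j, z i ≠ z j → c₁ / max (L i) (L j) < dist (z i) (z j))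
    {ξ : α} (hξ : HyperbolicSingular z L ξ) : ∃ i, dist ξ (z i) = 0 := by
  obtain ⟨N₀, hN₀, H⟩ := hξ (c₁ / 4) (by positivity)
  have hN₀pos : 0 < N₀ := zero_lt_one.trans hN₀
  have hscale : ∀ k : ℕ, N₀ ≤ 2 ^ k * N₀ := fun k =>
    le_mul_of_one_le_left hN₀pos.le (one_le_pow₀ one_le_two)
  obtain ⟨i₀, hi₀, hLi₀⟩ := H N₀ le_rfl
  have hwitness : ∀ k : ℕ, ∀ j, dist ξ (z j) < c₁ / 4 / (2 ^ k * N₀) →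
      L j < 2 ^ k * N₀ → z j = z i₀ := by
    intro k
    induction k with
    | zero =>
      intro j hj hLj
      simp only [pow_zero, one_mul] at hj hLj
      exact (eq_of_dist_lt_of_le_two_mul hL hc₁ hsep hN₀pos le_rfl (by linarith)
        hi₀ hLi₀ hj hLj).symm
    | succ k ih =>
      intro j hj hLj
      obtain ⟨i, hi, hLi⟩ := H _ (hscale k)
      rw [← ih i hi hLi]
      refine (eq_of_dist_lt_of_le_two_mul hL hc₁ hsep (by positivity) ?_ ?_
        hi hLi hj hLj).symm <;> rw [pow_succ] <;> nlinarith [hscale k]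
  have hbound : ∀ k : ℕ, dist ξ (z i₀) ≤ c₁ / 4 / (2 ^ k * N₀) := fun k => by
    obtain ⟨j, hj, hLj⟩ := H _ (hscale k)
    exact (hwitness k j hj hLj ▸ hj).le
  have hlim : Tendsto (fun k : ℕ => c₁ / 4 / (2 ^ k * N₀)) atTop (𝓝 0) :=
    tendsto_const_nhds.div_atTop
      ((tendsto_pow_atTop_atTop_of_one_lt one_lt_two).atTop_mul_const hN₀pos)
  exact ⟨i₀, le_antisymm (le_of_tendsto_of_tendsto' tendsto_const_nhds hlim hbound)
    dist_nonneg⟩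

end PseudoMetric

theorem singular_hyperbolic_iff_mem_orbit_general {d : ℕ} {I : Type*}
    (z : I → EuclideanSpace ℝ (Fin d)) (L : I → ℝ) (hL : ∀ i, 1 ≤ L i)
    (c₁ : ℝ) (hc₁ : 0 < c₁)
    (hsep : ∀ i j, z i ≠ z j → c₁ / max (L i) (L j) < dist (z i) (z j))
    (ξ : EuclideanSpace ℝ (Fin d)) :
    (∀ ε : ℝ, 0 < ε → ∃ N₀ : ℝ, 1 < N₀ ∧ ∀ N : ℝ, N₀ ≤ N →
        ∃ i : I, dist ξ (z i) < ε / N ∧ L i < N)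
      ↔ ∃ i : I, ξ = z i := by
  constructor
  · intro hξ
    obtain ⟨i, hi⟩ := HyperbolicSingular.exists_dist_eq_zero hL hc₁ hsep hξ
    exact ⟨i, dist_eq_zero.mp hi⟩
  · rintro ⟨i, rfl⟩
    exact hyperbolicSingular_apply_self z L i

/-- Under the hyperbolic separation hypothesis
`dist (z i) (z j) > c₁ / max (L i) (L j)` for distinct points, a point `ξ ∈ ℝ^d` is
singular in the hyperbolic sense iff it belongs to the family `z`. -/
theorem singular_hyperbolic_iff_mem_orbit {d : ℕ} {I : Type*} [Countable I]
    (z : I → EuclideanSpace ℝ (Fin d)) (L : I → ℝ) (hL : ∀ i, 1 ≤ L i)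
    (c₁ : ℝ) (hc₁ : 0 < c₁)
    (hsep : ∀ i j, z i ≠ z j → c₁ / max (L i) (L j) < dist (z i) (z j))
    (ξ : EuclideanSpace ℝ (Fin d)) :
    (∀ ε : ℝ, 0 < ε → ∃ N₀ : ℝ, 1 < N₀ ∧ ∀ N : ℝ, N₀ ≤ N →
        ∃ i : I, dist ξ (z i) < ε / N ∧ L i < N)
      ↔ ∃ i : I, ξ = z i :=
  singular_hyperbolic_iff_mem_orbit_general z L hL c₁ hc₁ hsep ξ
end

section
/- Let K ⊆ ℝ^d be compact, let α > 0, and let μ be a Borel probability measure on ℝ^d with support contained in K which is weakly absolutely α-decaying. Let I be a countable index set, z : I → ℝ^d an injective family of points, L : I → [1,∞) weights, and suppose there is c₁ > 0 such that |z_i − z_j| > c₁/max(L_i, L_j) for all i ≠ j. Let ψ : [1,∞) → [0,∞) be a decreasing function with ∑_{r=1}^∞ r^{α−1} ψ(r)^α < ∞. Then μ({ξ ∈ ℝ^d : |ξ − z_i| < ψ(L_i) for infinitely many i ∈ I}) = 0. -/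
/-!
Sort the indices into dyadic levels `2ⁿ ≤ L i < 2ⁿ⁺¹`. Inside level `n` the points `z i` are
`δₙ = c₁ / 2ⁿ⁺¹`-separated, so the balls of radius `δₙ / 2` around them are disjoint. Once
`ψ(2ⁿ) ≤ δₙ / 4`, the decay condition at scale `δₙ / 4`, applied at a point of `K` near `z i`, gives
`μ(B(z i, ψ(L i))) ≤ C (8 ψ(2ⁿ) / δₙ)^α μ(B(z i, δₙ / 2))`, so level `n` has total mass
`O((2ⁿ ψ(2ⁿ))^α)`. A block comparison over `[2ⁿ, 2ⁿ⁺¹)`, as in Cauchy condensation, turns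
`∑ r^(α-1) ψ(r)^α < ∞` into `∑ₙ (2ⁿ ψ(2ⁿ))^α < ∞`. Each of the finitely many remaining levels has
finite mass, because a bounded separated set in a proper space is finite and balls far from `K` are
null. Then `∑ᵢ μ(B(z i, ψ(L i))) < ∞`, and Borel–Cantelli applies.
-/

open Metric MeasureTheory Filter Set Bornology Topology Function

theorem rpow_sub_one_div_two_le_rpow {α x y : ℝ} (hα : 0 < α) (hx : 0 < x) (hxy : x ≤ y)
    (hy : y ≤ 2 * x) : x ^ (α - 1) / 2 ≤ y ^ (α - 1) := by
  have hx' : 0 ≤ x ^ (α - 1) := Real.rpow_nonneg hx.le _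
  rcases le_total 1 α with hα1 | hα1
  · linarith [Real.rpow_le_rpow hx.le hxy (sub_nonneg.2 hα1)]
  · have h2 : (2:ℝ)⁻¹ ≤ 2 ^ (α - 1) := by
      rw [← Real.rpow_neg_one]
      exact Real.rpow_le_rpow_of_exponent_le one_le_two (by linarith)
    calc x ^ (α - 1) / 2 = 2⁻¹ * x ^ (α - 1) := by ring
      _ ≤ 2 ^ (α - 1) * x ^ (α - 1) := by gcongr
      _ = (2 * x) ^ (α - 1) := (Real.mul_rpow zero_le_two hx.le).symm
      _ ≤ y ^ (α - 1) := Real.rpow_le_rpow_of_nonpos (by linarith) hy (by linarith)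

theorem Finset.sum_range_sum_Ico_two_pow {M : Type*} [AddCommMonoid M] (f : ℕ → M) (N : ℕ) :
    ∑ n ∈ Finset.range N, ∑ r ∈ Finset.Ico (2 ^ n) (2 ^ (n + 1)), f r =
      ∑ r ∈ Finset.Ico 1 (2 ^ N), f r := by
  induction N with
  | zero => simp
  | succ N ih =>
    rw [Finset.sum_range_succ, ih, Finset.sum_Ico_consecutive _ Nat.one_le_two_pow
      (Nat.pow_le_pow_right two_pos N.le_succ)]

theorem summable_of_le_mul_sum_Ico_two_pow {f b : ℕ → ℝ} (hf0 : ∀ r, 0 ≤ f r) (hf : Summable f)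
    (hb0 : ∀ n, 0 ≤ b n) {K : ℝ} (hK : 0 ≤ K)
    (hbf : ∀ n, b (n + 1) ≤ K * ∑ r ∈ Finset.Ico (2 ^ n) (2 ^ (n + 1)), f r) : Summable b := by
  rw [← summable_nat_add_iff 1]
  refine summable_of_sum_range_le (c := K * ∑' r, f r) (fun n => hb0 _) fun N => ?_
  calc ∑ n ∈ Finset.range N, b (n + 1)
      ≤ ∑ n ∈ Finset.range N, K * ∑ r ∈ Finset.Ico (2 ^ n) (2 ^ (n + 1)), f r :=
        Finset.sum_le_sum fun n _ => hbf n
    _ = K * ∑ r ∈ Finset.Ico 1 (2 ^ N), f r := by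
        rw [← Finset.mul_sum, Finset.sum_range_sum_Ico_two_pow]
    _ ≤ K * ∑' r, f r := by gcongr; exact hf.sum_le_tsum _ fun r _ => hf0 r

theorem summable_rpow_two_pow_mul_of_summable {α : ℝ} (hα : 0 < α) {ψ : ℝ → ℝ}
    (hψ0 : ∀ r : ℝ, 1 ≤ r → 0 ≤ ψ r) (hψmono : ∀ r s : ℝ, 1 ≤ r → r ≤ s → ψ s ≤ ψ r)
    (hsum : Summable fun r : ℕ => ((r : ℝ) + 1) ^ (α - 1) * ψ ((r : ℝ) + 1) ^ α) :
    Summable fun n : ℕ => ((2:ℝ) ^ n * ψ (2 ^ n)) ^ α := by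
  have hψ0' (r : ℕ) : 0 ≤ ψ ((r : ℝ) + 1) := hψ0 _ (by linarith [r.cast_nonneg (α := ℝ)])
  refine summable_of_le_mul_sum_Ico_two_pow (fun r => by have := hψ0' r; positivity) hsum
    (fun n => Real.rpow_nonneg (mul_nonneg (by positivity) (hψ0 _ (one_le_pow₀ one_le_two))) _)
    (by positivity : (0:ℝ) ≤ 2 * 2 ^ α) fun n => ?_
  set x : ℝ := 2 ^ n with hx_def
  have hx : 1 ≤ x := one_le_pow₀ one_le_two
  have hψx : 0 ≤ ψ (2 * x) := hψ0 _ (by linarith)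
  have hterm : ∀ r ∈ Finset.Ico (2 ^ n : ℕ) (2 ^ (n + 1)),
      x ^ (α - 1) / 2 * ψ (2 * x) ^ α ≤ ((r : ℝ) + 1) ^ (α - 1) * ψ ((r : ℝ) + 1) ^ α := by
    intro r hr
    rw [Finset.mem_Ico] at hr
    have h1 : x ≤ r + 1 := by
      have : (2:ℝ) ^ n ≤ r := by exact_mod_cast hr.1
      linarith
    have h2 : (r : ℝ) + 1 ≤ 2 * x := by
      have : (r : ℝ) + 1 ≤ 2 ^ (n + 1) := by exact_mod_cast Nat.succ_le_of_lt hr.2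
      rwa [pow_succ'] at this
    exact mul_le_mul (rpow_sub_one_div_two_le_rpow hα (by linarith) h1 h2)
      (Real.rpow_le_rpow hψx (hψmono _ _ (by linarith) h2) hα.le) (by positivity)
      (by positivity)
  have hcard : ((Finset.Ico (2 ^ n : ℕ) (2 ^ (n + 1))).card : ℝ) = x := by
    rw [Nat.card_Ico, pow_succ, hx_def]
    push_cast [show 2 ^ n * 2 - 2 ^ n = 2 ^ n by omega]
    ring
  calc ((2:ℝ) ^ (n + 1) * ψ (2 ^ (n + 1))) ^ α
      = 2 * 2 ^ α * (x * (x ^ (α - 1) / 2 * ψ (2 * x) ^ α)) := by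
        rw [pow_succ', ← hx_def, Real.mul_rpow (by positivity) hψx,
          Real.mul_rpow zero_le_two (by positivity), Real.rpow_sub_one (by positivity)]
        field_simp
    _ ≤ 2 * 2 ^ α * ∑ r ∈ Finset.Ico (2 ^ n : ℕ) (2 ^ (n + 1)),
          ((r : ℝ) + 1) ^ (α - 1) * ψ ((r : ℝ) + 1) ^ α := by
        gcongr
        simpa only [nsmul_eq_mul, hcard] using Finset.card_nsmul_le_sum _ _ _ hterm

noncomputable def dyadicLevel (x : ℝ) : ℕ := Nat.log 2 ⌊x⌋₊

theorem two_pow_dyadicLevel_le {x : ℝ} (hx : 1 ≤ x) : (2:ℝ) ^ dyadicLevel x ≤ x := by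
  exact_mod_cast (Nat.le_floor_iff (by linarith)).1
    (Nat.pow_log_le_self 2 (Nat.floor_pos.2 hx).ne')

theorem lt_two_pow_dyadicLevel_succ {x : ℝ} (hx : 0 ≤ x) : x < 2 ^ (dyadicLevel x + 1) := by
  exact_mod_cast (Nat.floor_lt hx).1 (Nat.lt_pow_succ_log_self one_lt_two _)

theorem pairwise_lt_dist_of_dyadicLevel_eq {ι X : Type*} [PseudoMetricSpace X] {z : ι → X}
    {L : ι → ℝ} (hL : ∀ i, 1 ≤ L i) {c : ℝ} (hc : 0 < c)
    (hsep : ∀ i j, i ≠ j → c / max (L i) (L j) < dist (z i) (z j)) (n : ℕ) :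
    Pairwise fun i j : (dyadicLevel ∘ L) ⁻¹' {n} => c / 2 ^ (n + 1) < dist (z i) (z j) := by
  have hlt {i : ι} (hi : dyadicLevel (L i) = n) : L i < 2 ^ (n + 1) :=
    hi ▸ lt_two_pow_dyadicLevel_succ (by linarith [hL i])
  rintro ⟨i, hi : dyadicLevel (L i) = n⟩ ⟨j, hj : dyadicLevel (L j) = n⟩ hij
  exact (div_lt_div_of_pos_left hc (by linarith [hL i, le_max_left (L i) (L j)])
    (max_lt (hlt hi) (hlt hj))).trans (hsep i j fun h => hij (Subtype.ext h))

theorem ENNReal.tsum_ne_top_of_eventually_le {f g : ℕ → ENNReal} (hf : ∀ n, f n ≠ ⊤)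
    (hg : ∑' n, g n ≠ ⊤) (hfg : ∀ᶠ n in atTop, f n ≤ g n) : ∑' n, f n ≠ ⊤ := by
  obtain ⟨N, hN⟩ := eventually_atTop.1 hfg
  rw [← ENNReal.summable.sum_add_tsum_nat_add' (k := N)]
  refine ENNReal.add_ne_top.2 ⟨ENNReal.sum_ne_top.2 fun n _ => hf n, ne_top_of_le_ne_top hg ?_⟩
  calc ∑' n, f (n + N) ≤ ∑' n, g (n + N) :=
        ENNReal.tsum_le_tsum fun n => hN _ (Nat.le_add_left N n)
    _ ≤ ∑' n, g n := ENNReal.tsum_comp_le_tsum_of_injective (add_left_injective N) g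

theorem TotallyBounded.finite_of_pairwise_lt_dist {X : Type*} [PseudoMetricSpace X] {s : Set X}
    {δ : ℝ} (hs : TotallyBounded s) (hδ : 0 < δ) (hsep : s.Pairwise fun x y => δ < dist x y) :
    s.Finite := by
  obtain ⟨t, ht, hst⟩ := Metric.totallyBounded_iff.1 hs (δ / 2) (half_pos hδ)
  have hnear : ∀ x ∈ s, ∃ y ∈ t, dist x y < δ / 2 := fun x hx => by
    simpa using hst hx
  choose! g hgt hg using hnear
  refine Set.Finite.of_finite_image (ht.subset (image_subset_iff.2 hgt)) fun x hx y hy hxy => ?_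
  by_contra hne
  have hgy := hg y hy
  rw [← hxy] at hgy
  linarith [hsep hx hy hne, hg x hx, dist_triangle_right x y (g x)]

theorem MeasureTheory.inter_nonempty_of_measure_ne_zero {X : Type*} [MeasurableSpace X]
    {μ : Measure X} {K s : Set X} (hK : μ Kᶜ = 0) (hs : μ s ≠ 0) : (K ∩ s).Nonempty := by
  by_contra! h
  exact hs (measure_mono_null (fun x hx hxK => h.subset ⟨hxK, hx⟩) hK)

section Decay

variable {X ι : Type*} [PseudoMetricSpace X] [MeasurableSpace X] {μ : Measure X} {K : Set X}

theorem tsum_measure_ball_ne_top_of_isBounded [ProperSpace X] [IsFiniteMeasure μ]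
    (hKb : IsBounded K) (hK : μ Kᶜ = 0) {z : ι → X} {δ : ℝ} (hδ : 0 < δ)
    (hsep : Pairwise fun i j => δ < dist (z i) (z j)) (ρ : ℝ) :
    ∑' i, μ (ball (z i) ρ) ≠ ⊤ := by
  have hz : Function.Injective z := fun i j hij => by
    by_contra hne
    simpa [hij] using (hδ.trans (hsep hne)).ne'
  have hsupp : (support fun i => μ (ball (z i) ρ)) ⊆ z ⁻¹' thickening ρ K := fun i hi => by
    obtain ⟨ξ, hξK, hξ⟩ := inter_nonempty_of_measure_ne_zero hK hi
    exact mem_thickening_iff.2 ⟨ξ, hξK, mem_ball'.1 hξ⟩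
  have himg : IsBounded (z '' support fun i => μ (ball (z i) ρ)) :=
    hKb.thickening.subset (image_subset_iff.2 hsupp)
  have hfin : (support fun i => μ (ball (z i) ρ)).Finite := by
    refine Set.Finite.of_finite_image ?_ hz.injOn
    refine (himg.isCompact_closure.totallyBounded.subset subset_closure).finite_of_pairwise_lt_dist
      hδ ?_
    rintro _ ⟨i, -, rfl⟩ _ ⟨j, -, rfl⟩ hne
    exact hsep (ne_of_apply_ne z hne)
  rw [tsum_eq_sum' (s := hfin.toFinset) (by simp)]
  exact ENNReal.sum_ne_top.2 fun _ _ => measure_ne_top _ _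

def IsWeaklyAbsolutelyDecayingWith (μ : Measure X) (K : Set X) (C α r₀ : ℝ) : Prop :=
  ∀ ε > (0:ℝ), ∀ x ∈ K, ∀ r : ℝ, 0 < r → r < r₀ →
    μ (closedBall x (ε * r)) ≤ ENNReal.ofReal (C * ε ^ α) * μ (closedBall x r)

namespace IsWeaklyAbsolutelyDecayingWith

variable {C α r₀ : ℝ}

theorem measure_ball_le (h : IsWeaklyAbsolutelyDecayingWith μ K C α r₀) (hK : μ Kᶜ = 0) (z : X)
    {ρ r : ℝ} (hr : 0 < r) (hr₀ : r < r₀) (hρ : ρ ≤ r) :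
    μ (ball z ρ) ≤ ENNReal.ofReal (C * (2 * ρ / r) ^ α) * μ (closedBall z (2 * r)) := by
  by_cases h0 : μ (ball z ρ) = 0
  · simp [h0]
  -- `z` itself need not lie in `K`: the decay condition is applied at a point `ξ ∈ K ∩ ball z ρ`.
  obtain ⟨ξ, hξK, hξz⟩ := inter_nonempty_of_measure_ne_zero hK h0
  rw [mem_ball] at hξz
  have hρ0 : 0 < ρ := dist_nonneg.trans_lt hξz
  calc μ (ball z ρ) ≤ μ (closedBall ξ (2 * ρ / r * r)) := by
        refine measure_mono fun y hy => ?_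
        rw [mem_ball] at hy
        rw [mem_closedBall, div_mul_cancel₀ _ hr.ne']
        linarith [dist_triangle y z ξ, dist_comm ξ z]
    _ ≤ ENNReal.ofReal (C * (2 * ρ / r) ^ α) * μ (closedBall ξ r) :=
        h _ (by positivity) ξ hξK r hr hr₀
    _ ≤ ENNReal.ofReal (C * (2 * ρ / r) ^ α) * μ (closedBall z (2 * r)) := by
        gcongr
        refine fun y hy => ?_
        rw [mem_closedBall] at hy ⊢
        linarith [dist_triangle y ξ z]

theorem tsum_measure_ball_le [OpensMeasurableSpace X] [Countable ι]
    (h : IsWeaklyAbsolutelyDecayingWith μ K C α r₀) (hK : μ Kᶜ = 0) {z : ι → X} {δ ρ : ℝ}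
    (hδ : 0 < δ) (hδr₀ : δ / 4 < r₀) (hρ : ρ ≤ δ / 4)
    (hsep : Pairwise fun i j => δ < dist (z i) (z j)) :
    ∑' i, μ (ball (z i) ρ) ≤ ENNReal.ofReal (C * (8 * ρ / δ) ^ α) * μ univ := by
  have hdisj : Pairwise (Disjoint on fun i => closedBall (z i) (δ / 2)) := fun i j hij =>
    closedBall_disjoint_closedBall (by linarith [hsep hij])
  have hε : 2 * ρ / (δ / 4) = 8 * ρ / δ := by field_simp; ring
  have hr : 2 * (δ / 4) = δ / 2 := by ring
  calc ∑' i, μ (ball (z i) ρ)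
      ≤ ∑' i, ENNReal.ofReal (C * (8 * ρ / δ) ^ α) * μ (closedBall (z i) (δ / 2)) :=
        ENNReal.tsum_le_tsum fun i => hε ▸ hr ▸ h.measure_ball_le hK (z i) (by positivity) hδr₀ hρ
    _ = ENNReal.ofReal (C * (8 * ρ / δ) ^ α) * μ (⋃ i, closedBall (z i) (δ / 2)) := by
        rw [ENNReal.tsum_mul_left, measure_iUnion hdisj fun _ => measurableSet_closedBall]
    _ ≤ ENNReal.ofReal (C * (8 * ρ / δ) ^ α) * μ univ := by gcongr; exact subset_univ _

theorem tsum_measure_ball_ne_top [ProperSpace X] [OpensMeasurableSpace X] [IsFiniteMeasure μ]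
    [Countable ι] (h : IsWeaklyAbsolutelyDecayingWith μ K C α r₀) (hC : 0 ≤ C) (hr₀ : 0 < r₀)
    (hα : 0 < α) (hKb : IsBounded K) (hK : μ Kᶜ = 0) {z : ι → X} (lev : ι → ℕ) {δ ρ : ℕ → ℝ}
    (hδ : ∀ n, 0 < δ n) (hδ_lim : Tendsto δ atTop (𝓝 0))
    (hsep : ∀ n, Pairwise fun i j : lev ⁻¹' {n} => δ n < dist (z i) (z j))
    (hρ : ∀ n, 0 ≤ ρ n) (hρδ : Summable fun n => (ρ n / δ n) ^ α) :
    ∑' i, μ (ball (z i) (ρ (lev i))) ≠ ⊤ := by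
  have hfiber (n : ℕ) : ∑' i : lev ⁻¹' {n}, μ (ball (z i) (ρ (lev i))) =
      ∑' i : lev ⁻¹' {n}, μ (ball (z i) (ρ n)) :=
    tsum_congr fun i => by rw [show lev i = n from i.2]
  rw [← ENNReal.tsum_fiberwise _ lev]
  simp only [hfiber]
  have hsmall : ∀ᶠ n in atTop, δ n / 4 < r₀ ∧ ρ n ≤ δ n / 4 := by
    have h1 := hδ_lim.eventually (gt_mem_nhds (by positivity : (0:ℝ) < 4 * r₀))
    have h2 := hρδ.tendsto_atTop_zero.eventually
      (gt_mem_nhds (by positivity : (0:ℝ) < (1 / 4) ^ α))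
    filter_upwards [h1, h2] with n h1 h2
    rw [Real.rpow_lt_rpow_iff (div_nonneg (hρ n) (hδ n).le) (by norm_num) hα,
      div_lt_iff₀ (hδ n)] at h2
    constructor <;> linarith
  have hg : Summable fun n => C * (8 * ρ n / δ n) ^ α := by
    refine (hρδ.mul_left (C * 8 ^ α)).congr fun n => ?_
    rw [mul_div_assoc, Real.mul_rpow (by norm_num) (div_nonneg (hρ n) (hδ n).le)]
    ring
  refine ENNReal.tsum_ne_top_of_eventually_le
    (g := fun n => ENNReal.ofReal (C * (8 * ρ n / δ n) ^ α) * μ univ)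
    (fun n => tsum_measure_ball_ne_top_of_isBounded hKb hK (hδ n) (hsep n) (ρ n)) ?_
    (hsmall.mono fun n hn => h.tsum_measure_ball_le hK (hδ n) hn.1 hn.2 (hsep n))
  rw [ENNReal.tsum_mul_right, ← ENNReal.ofReal_tsum_of_nonneg
    (fun n => mul_nonneg hC
    (Real.rpow_nonneg (div_nonneg (by linarith [hρ n]) (hδ n).le) α)) hg]
  exact ENNReal.mul_ne_top ENNReal.ofReal_ne_top (measure_ne_top μ univ)

end IsWeaklyAbsolutelyDecayingWith

end Decay

theorem measure_limsup_zero_of_weakly_decaying_general {d : ℕ} {I : Type*} [Countable I]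
    (K : Set (EuclideanSpace ℝ (Fin d))) (hK : IsCompact K)
    (α : ℝ) (hα : 0 < α)
    (μ : Measure (EuclideanSpace ℝ (Fin d))) [IsProbabilityMeasure μ]
    (hsupp : μ Kᶜ = 0)
    (hdecay : ∃ C > (0:ℝ), ∃ r₀ > (0:ℝ), ∀ ε > (0:ℝ), ∀ x ∈ K, ∀ r : ℝ, 0 < r → r < r₀ →
      μ (closedBall x (ε * r)) ≤ ENNReal.ofReal (C * ε ^ α) * μ (closedBall x r))
    (z : I → EuclideanSpace ℝ (Fin d))
    (L : I → ℝ) (hL : ∀ i, 1 ≤ L i)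
    (c₁ : ℝ) (hc₁ : 0 < c₁)
    (hsep : ∀ i j, i ≠ j → c₁ / max (L i) (L j) < dist (z i) (z j))
    (ψ : ℝ → ℝ) (hψ0 : ∀ r : ℝ, 1 ≤ r → 0 ≤ ψ r)
    (hψmono : ∀ r s : ℝ, 1 ≤ r → r ≤ s → ψ s ≤ ψ r)
    (hsum : Summable (fun r : ℕ => ((r : ℝ) + 1) ^ (α - 1) * ψ ((r : ℝ) + 1) ^ α)) :
    μ {ξ : EuclideanSpace ℝ (Fin d) | {i : I | dist ξ (z i) < ψ (L i)}.Infinite} = 0 := by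
  obtain ⟨C, hC, r₀, hr₀, hdec⟩ :
      ∃ C > (0:ℝ), ∃ r₀ > (0:ℝ), IsWeaklyAbsolutelyDecayingWith μ K C α r₀ := hdecay
  have hpow (n : ℕ) : (1:ℝ) ≤ 2 ^ n := one_le_pow₀ one_le_two
  have hψδ : Summable fun n : ℕ => (ψ (2 ^ n) / (c₁ / 2 ^ (n + 1))) ^ α := by
    refine ((summable_rpow_two_pow_mul_of_summable hα hψ0 hψmono hsum).mul_left
      ((2 / c₁) ^ α)).congr fun n => ?_
    rw [← Real.mul_rpow (by positivity) (mul_nonneg (by positivity) (hψ0 _ (hpow n)))]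
    congr 1
    field_simp
    ring
  have hδ_lim : Tendsto (fun n : ℕ => c₁ / 2 ^ (n + 1)) atTop (𝓝 0) :=
    (tendsto_const_nhds.div_atTop (tendsto_pow_atTop_atTop_of_one_lt one_lt_two)).comp
      (tendsto_add_atTop_nat 1)
  have hle : ∑' i, μ (ball (z i) (ψ (L i))) ≤ ∑' i, μ (ball (z i) (ψ (2 ^ dyadicLevel (L i)))) :=
    ENNReal.tsum_le_tsum fun i => measure_mono
      (ball_subset_ball (hψmono _ _ (hpow _) (two_pow_dyadicLevel_le (hL i))))
  refine ae_iff.1 (ae_finite_setOfPred_mem (ne_top_of_le_ne_top ?_ hle))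
  exact hdec.tsum_measure_ball_ne_top hC.le hr₀ hα hK.isBounded hsupp (dyadicLevel ∘ L)
    (fun n => by positivity) hδ_lim (pairwise_lt_dist_of_dyadicLevel_eq hL hc₁ hsep)
    (fun n => hψ0 _ (hpow n)) hψδ

/-- convergence Borel–Cantelli statement for weakly absolutely
α-decaying measures (abstract form of the paper's Theorem 2). -/
theorem measure_limsup_zero_of_weakly_decaying {d : ℕ} {I : Type*} [Countable I]
    (K : Set (EuclideanSpace ℝ (Fin d))) (hK : IsCompact K)
    (α : ℝ) (hα : 0 < α)
    (μ : Measure (EuclideanSpace ℝ (Fin d))) [IsProbabilityMeasure μ]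
    (hsupp : μ Kᶜ = 0)
    (hdecay : ∃ C > (0:ℝ), ∃ r₀ > (0:ℝ), ∀ ε > (0:ℝ), ∀ x ∈ K, ∀ r : ℝ, 0 < r → r < r₀ →
      μ (closedBall x (ε * r)) ≤ ENNReal.ofReal (C * ε ^ α) * μ (closedBall x r))
    (z : I → EuclideanSpace ℝ (Fin d)) (hz : Function.Injective z)
    (L : I → ℝ) (hL : ∀ i, 1 ≤ L i)
    (c₁ : ℝ) (hc₁ : 0 < c₁)
    (hsep : ∀ i j, i ≠ j → c₁ / max (L i) (L j) < dist (z i) (z j))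
    (ψ : ℝ → ℝ) (hψ0 : ∀ r : ℝ, 1 ≤ r → 0 ≤ ψ r)
    (hψmono : ∀ r s : ℝ, 1 ≤ r → r ≤ s → ψ s ≤ ψ r)
    (hsum : Summable (fun r : ℕ => ((r : ℝ) + 1) ^ (α - 1) * ψ ((r : ℝ) + 1) ^ α)) :
    μ {ξ : EuclideanSpace ℝ (Fin d) | {i : I | dist ξ (z i) < ψ (L i)}.Infinite} = 0 :=
  measure_limsup_zero_of_weakly_decaying_general K hK α hα μ hsupp hdecay z L hL c₁ hc₁ hsep ψ hψ0
    hψmono hsum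
end

section
/- Let K ⊆ ℝ^d be compact, let α > 0, and let μ be a Borel probability measure on ℝ^d with support contained in K which is weakly absolutely α-decaying. Let I be a countable index set, z : I → ℝ^d an injective family of points, L : I → [1,∞) weights, and suppose there is c₁ > 0 such that |z_i − z_j| > c₁/max(L_i, L_j) for all i ≠ j. Then for every τ > 1, μ({ξ ∈ ℝ^d : |ξ − z_i| < L_i^{−τ} for infinitely many i ∈ I}) = 0; that is, K is μ-extremal with respect to the family (z_i, L_i). -/
/-!
Sort the indices into dyadic layers `2 ^ k ≤ L i < 2 ^ (k + 1)`. Inside a layer the points are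
`c₁ 2 ^ (-k - 1)`-separated, so each `ξ` is `L i ^ (-τ)`-close to only finitely many of them, and
an infinitely often approximable `ξ` lies in infinitely many of the sets
`E k = ⋃ (i in layer k), closedBall (z i) (2 ^ (-k τ))`. A ball of `E k` meeting `K` lies in a
ball of twice the radius centred at a point of `K`; by the decay property its measure is at most
`C ε ^ α` times that of the concentric ball of radius `r ≍ c₁ 2 ^ (-k)`, and these smaller balls
are disjoint by the separation. Hence `μ (E k) ≤ C ε ^ α` with `ε ≍ 2 ^ (k (1 - τ))`, which is
summable, and Borel–Cantelli concludes.
-/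

open Metric MeasureTheory Set Filter

theorem TotallyBounded.finite_of_separated {ι X : Type*} [PseudoMetricSpace X] {s : Set X}
    (hs : TotallyBounded s) {T : Set ι} {f : ι → X} (hf : MapsTo f T s) {δ : ℝ} (hδ : 0 < δ)
    (hsep : T.Pairwise fun i j => δ < dist (f i) (f j)) : T.Finite := by
  obtain ⟨t, ht, hcover⟩ := totallyBounded_iff.mp hs (δ / 2) (half_pos hδ)
  have hT : T ⊆ ⋃ y ∈ t, {i ∈ T | f i ∈ ball y (δ / 2)} := fun i hi => by
    simpa [hi] using hcover (hf hi)
  refine (ht.biUnion fun y _ => Subsingleton.finite fun i hi j hj => ?_).subset hT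
  by_contra hne
  have := hsep hi.1 hj.1 hne
  have := dist_triangle_right (f i) (f j) y
  linarith [mem_ball.mp hi.2, mem_ball.mp hj.2]

section Decay

variable {ι X : Type*} [PseudoMetricSpace X] [MeasurableSpace X] {μ : Measure X} {K : Set X}

def WeaklyDecayingWith (μ : Measure X) (K : Set X) (C α r₀ : ℝ) : Prop :=
  ∀ ε > (0:ℝ), ∀ x ∈ K, ∀ r : ℝ, 0 < r → r < r₀ →
    μ (closedBall x (ε * r)) ≤ ENNReal.ofReal (C * ε ^ α) * μ (closedBall x r)

theorem exists_measure_closedBall_le_of_decay (hK : μ Kᶜ = 0) {ρ R r : ℝ} {c : ENNReal}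
    (hρ : 0 ≤ ρ) (hR : 2 * ρ ≤ R) (hdecay : ∀ x ∈ K, μ (closedBall x R) ≤ c * μ (closedBall x r))
    (z : X) : ∃ x, dist x z ≤ ρ ∧ μ (closedBall z ρ) ≤ c * μ (closedBall x r) := by
  by_cases h : (closedBall z ρ ∩ K).Nonempty
  · obtain ⟨x, hxz, hxK⟩ := h
    refine ⟨x, hxz, (measure_mono (closedBall_subset_closedBall' ?_)).trans (hdecay x hxK)⟩
    rw [dist_comm]
    linarith [mem_closedBall.mp hxz]
  · refine ⟨z, by simpa using hρ, ?_⟩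
    rw [measure_mono_null (fun w hw hwK => h ⟨w, hw, hwK⟩) hK]
    exact zero_le

theorem measure_biUnion_closedBall_le_of_decay [OpensMeasurableSpace X] (hK : μ Kᶜ = 0)
    {s : Set ι} (hs : s.Countable) {z : ι → X} {ρ R r : ℝ} {c : ENNReal} (hρ : 0 ≤ ρ)
    (hR : 2 * ρ ≤ R) (hdecay : ∀ x ∈ K, μ (closedBall x R) ≤ c * μ (closedBall x r))
    (hsep : s.Pairwise fun i j => 2 * ρ + 2 * r < dist (z i) (z j)) :
    μ (⋃ i ∈ s, closedBall (z i) ρ) ≤ c * μ univ := by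
  choose x hxz hx using fun i => exists_measure_closedBall_le_of_decay hK hρ hR hdecay (z i)
  have hdisj : s.PairwiseDisjoint fun i => closedBall (x i) r := by
    intro i hi j hj hij
    apply closedBall_disjoint_closedBall
    have := dist_triangle4 (z i) (x i) (x j) (z j)
    have := hsep hi hj hij
    linarith [dist_comm (z i) (x i) ▸ hxz i, hxz j]
  calc μ (⋃ i ∈ s, closedBall (z i) ρ) ≤ ∑' i : s, μ (closedBall (z i) ρ) :=
        measure_biUnion_le μ hs _
    _ ≤ ∑' i : s, c * μ (closedBall (x i) r) := ENNReal.tsum_le_tsum fun i => hx i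
    _ = c * μ (⋃ i ∈ s, closedBall (x i) r) := by
        rw [ENNReal.tsum_mul_left, measure_biUnion hs hdisj fun _ _ => measurableSet_closedBall]
    _ ≤ c * μ univ := by gcongr; exact subset_univ _

end Decay

theorem summable_mul_rpow_mul_geometric (C : ℝ) {a q α : ℝ} (ha : 0 ≤ a) (hq₀ : 0 ≤ q)
    (hq : q < 1) (hα : 0 < α) : Summable fun k : ℕ => C * (a * q ^ k) ^ α :=
  ((summable_geometric_of_lt_one (Real.rpow_nonneg hq₀ α) (Real.rpow_lt_one hq₀ hq hα)).mul_left
    (C * a ^ α)).congr fun k => by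
      rw [Real.mul_rpow ha (pow_nonneg hq₀ k), Real.rpow_pow_comm hq₀]
      ring

theorem two_mul_two_rpow_neg_lt_one {τ : ℝ} (hτ : 1 < τ) : (2:ℝ) * 2 ^ (-τ) < 1 := by
  have : (2:ℝ) ^ (-τ) < 2 ^ (-1:ℝ) := Real.rpow_lt_rpow_of_exponent_lt one_lt_two (by linarith)
  rw [Real.rpow_neg_one] at this
  linarith

theorem measure_limsup_atTop_eq_zero_of_eventually_le {Ω : Type*} [MeasurableSpace Ω]
    {μ : Measure Ω} {s : ℕ → Set Ω} {f : ℕ → ℝ} (hf : Summable f)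
    (h : ∀ᶠ k in atTop, μ (s k) ≤ ENNReal.ofReal (f k)) : μ (limsup s atTop) = 0 := by
  obtain ⟨N, hN⟩ := eventually_atTop.mp h
  rw [← limsup_nat_add s N]
  refine measure_limsup_atTop_eq_zero (ne_top_of_le_ne_top ?_
    (ENNReal.tsum_le_tsum fun m => hN (m + N) (Nat.le_add_left N m)))
  exact ENNReal.tsum_coe_ne_top_iff_summable.mpr ((summable_nat_add_iff N).mpr hf).toNNReal

section Layers

variable {ι X : Type*} [PseudoMetricSpace X] {z : ι → X} {L : ι → ℝ} {c₁ t : ℝ}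

def dyadicLayer (L : ι → ℝ) (t : ℝ) : Set ι := {i | t ≤ L i ∧ L i < 2 * t}

theorem dyadicLayer_pairwise_lt_dist
    (hsep : ∀ i j, i ≠ j → c₁ / max (L i) (L j) < dist (z i) (z j)) (hc₁ : 0 ≤ c₁)
    (ht : 0 < t) : (dyadicLayer L t).Pairwise fun i j => c₁ / (2 * t) < dist (z i) (z j) := by
  intro i hi j hj hij
  refine lt_of_le_of_lt ?_ (hsep i j hij)
  have : 0 < max (L i) (L j) := ht.trans_le (hi.1.trans (le_max_left _ _))
  gcongr
  exact max_le hi.2.le hj.2.le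

theorem measure_biUnion_dyadicLayer_le [Countable ι] [MeasurableSpace X]
    [OpensMeasurableSpace X] {μ : Measure X} {K : Set X} {C α r₀ : ℝ}
    (hdecay : WeaklyDecayingWith μ K C α r₀) (hK : μ Kᶜ = 0)
    (hsep : ∀ i j, i ≠ j → c₁ / max (L i) (L j) < dist (z i) (z j)) (hc₁ : 0 < c₁)
    (ht : 0 < t) {ρ : ℝ} (hρ : 0 < ρ) (hρt : ρ ≤ c₁ / (8 * t)) (hr₀ : c₁ / (8 * t) < r₀) :
    μ (⋃ i ∈ dyadicLayer L t, closedBall (z i) ρ) ≤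
      ENNReal.ofReal (C * (16 * t * ρ / c₁) ^ α) * μ univ := by
  have hεr : 16 * t * ρ / c₁ * (c₁ / (8 * t)) = 2 * ρ := by field_simp; ring
  refine measure_biUnion_closedBall_le_of_decay hK (to_countable _) hρ.le hεr.ge
    (fun x hx => hdecay _ (by positivity) x hx _ (by positivity) hr₀) ?_
  refine (dyadicLayer_pairwise_lt_dist hsep hc₁.le ht).mono' fun i j h => lt_of_le_of_lt ?_ h
  have : c₁ / (2 * t) = 4 * (c₁ / (8 * t)) := by field_simp; ring
  linarith

theorem setOf_infinite_subset_limsup [ProperSpace X]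
    (hsep : ∀ i j, i ≠ j → c₁ / max (L i) (L j) < dist (z i) (z j)) (hc₁ : 0 < c₁)
    (hL : ∀ i, 1 ≤ L i) {τ : ℝ} (hτ : 0 ≤ τ) :
    {ξ | {i | dist ξ (z i) < L i ^ (-τ)}.Infinite} ⊆
      limsup (fun k : ℕ => ⋃ i ∈ dyadicLayer L (2 ^ k), closedBall (z i) (((2:ℝ) ^ k) ^ (-τ)))
        atTop := by
  intro ξ hξ
  rw [mem_limsup_iff_frequently_mem, Nat.frequently_atTop_iff_infinite]
  intro hfin
  have hclose : ∀ k : ℕ, ∀ i ∈ {i | dist ξ (z i) < L i ^ (-τ)} ∩ dyadicLayer L (2 ^ k),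
      dist ξ (z i) ≤ ((2:ℝ) ^ k) ^ (-τ) := by
    rintro k i ⟨hi, hik⟩
    exact hi.le.trans (Real.rpow_le_rpow_of_nonpos (by positivity) hik.1 (neg_nonpos.mpr hτ))
  refine hξ ((hfin.biUnion
    (t := fun k => {i | dist ξ (z i) < L i ^ (-τ)} ∩ dyadicLayer L (2 ^ k))
    fun k _ => ?_).subset fun i hi => ?_)
  · exact (isCompact_closedBall ξ _).totallyBounded.finite_of_separated
      (fun i hi => mem_closedBall'.mpr (hclose k i hi)) (by positivity)
      ((dyadicLayer_pairwise_lt_dist hsep hc₁.le (by positivity)).mono inter_subset_right)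
  · obtain ⟨k, hk, hk'⟩ := exists_nat_pow_near (hL i) one_lt_two
    have hik : i ∈ dyadicLayer L (2 ^ k) := ⟨hk, by rwa [← pow_succ']⟩
    exact mem_iUnion₂.mpr ⟨k, mem_biUnion hik (hclose k i ⟨hi, hik⟩), hi, hik⟩

theorem eventually_measure_biUnion_dyadicLayer_le [Countable ι] [MeasurableSpace X]
    [OpensMeasurableSpace X] {μ : Measure X} {K : Set X} {C α r₀ : ℝ}
    (hdecay : WeaklyDecayingWith μ K C α r₀) (hK : μ Kᶜ = 0) (hr₀ : 0 < r₀)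
    (hsep : ∀ i j, i ≠ j → c₁ / max (L i) (L j) < dist (z i) (z j)) (hc₁ : 0 < c₁)
    {τ : ℝ} (hτ : 1 < τ) :
    ∀ᶠ k : ℕ in atTop,
      μ (⋃ i ∈ dyadicLayer L (2 ^ k), closedBall (z i) (((2:ℝ) ^ k) ^ (-τ))) ≤
        ENNReal.ofReal (C * (16 / c₁ * (2 * 2 ^ (-τ)) ^ k) ^ α) * μ univ := by
  set q : ℝ := 2 * 2 ^ (-τ)
  have hq : q < 1 := two_mul_two_rpow_neg_lt_one hτ
  have hρ : ∀ k : ℕ, ((2:ℝ) ^ k) ^ (-τ) = q ^ k / 2 ^ k := fun k => by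
    rw [← Real.rpow_pow_comm zero_le_two, mul_pow]
    field_simp
  have hq_small : ∀ᶠ k : ℕ in atTop, q ^ k ≤ c₁ / 8 :=
    (tendsto_pow_atTop_nhds_zero_of_lt_one (by positivity) hq).eventually_le_const
      (by positivity)
  have hr_small : ∀ᶠ k : ℕ in atTop, c₁ / (8 * 2 ^ k) < r₀ :=
    (tendsto_const_nhds.div_atTop
      ((tendsto_pow_atTop_atTop_of_one_lt one_lt_two).const_mul_atTop (by norm_num))
      ).eventually_lt_const hr₀
  filter_upwards [hq_small, hr_small] with k hqk hrk
  rw [hρ k]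
  refine (measure_biUnion_dyadicLayer_le hdecay hK hsep hc₁ (by positivity) (by positivity)
    ?_ hrk).trans_eq ?_
  · rw [← div_div]
    gcongr
  · congr 4
    field_simp

end Layers

theorem extremal_of_weakly_decaying_general {d : ℕ} {I : Type*} [Countable I]
    (K : Set (EuclideanSpace ℝ (Fin d)))
    (α : ℝ) (hα : 0 < α)
    (μ : Measure (EuclideanSpace ℝ (Fin d))) [IsProbabilityMeasure μ]
    (hsupp : μ Kᶜ = 0)
    (hdecay : ∃ C > (0:ℝ), ∃ r₀ > (0:ℝ), ∀ ε > (0:ℝ), ∀ x ∈ K, ∀ r : ℝ, 0 < r → r < r₀ →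
      μ (closedBall x (ε * r)) ≤ ENNReal.ofReal (C * ε ^ α) * μ (closedBall x r))
    (z : I → EuclideanSpace ℝ (Fin d))
    (L : I → ℝ) (hL : ∀ i, 1 ≤ L i)
    (c₁ : ℝ) (hc₁ : 0 < c₁)
    (hsep : ∀ i j, i ≠ j → c₁ / max (L i) (L j) < dist (z i) (z j)) :
    ∀ τ : ℝ, 1 < τ →
      μ {ξ : EuclideanSpace ℝ (Fin d) | {i : I | dist ξ (z i) < L i ^ (-τ)}.Infinite} = 0 := by
  intro τ hτ
  obtain ⟨C, -, r₀, hr₀, hdec⟩ := hdecay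
  have hsum : Summable fun k : ℕ => C * (16 / c₁ * (2 * 2 ^ (-τ)) ^ k) ^ α :=
    summable_mul_rpow_mul_geometric C (by positivity) (by positivity)
      (two_mul_two_rpow_neg_lt_one hτ) hα
  refine measure_mono_null (setOf_infinite_subset_limsup hsep hc₁ hL (by linarith))
    (measure_limsup_atTop_eq_zero_of_eventually_le hsum ?_)
  simpa only [measure_univ, mul_one] using
    eventually_measure_biUnion_dyadicLayer_le hdec hsupp hr₀ hsep hc₁ hτ

/-- sets supporting weakly absolutely α-decaying measures are
μ-extremal with respect to a separated family (abstract form of the paper's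
Corollary 1). -/
theorem extremal_of_weakly_decaying {d : ℕ} {I : Type*} [Countable I]
    (K : Set (EuclideanSpace ℝ (Fin d))) (hK : IsCompact K)
    (α : ℝ) (hα : 0 < α)
    (μ : Measure (EuclideanSpace ℝ (Fin d))) [IsProbabilityMeasure μ]
    (hsupp : μ Kᶜ = 0)
    (hdecay : ∃ C > (0:ℝ), ∃ r₀ > (0:ℝ), ∀ ε > (0:ℝ), ∀ x ∈ K, ∀ r : ℝ, 0 < r → r < r₀ →
      μ (closedBall x (ε * r)) ≤ ENNReal.ofReal (C * ε ^ α) * μ (closedBall x r))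
    (z : I → EuclideanSpace ℝ (Fin d)) (hz : Function.Injective z)
    (L : I → ℝ) (hL : ∀ i, 1 ≤ L i)
    (c₁ : ℝ) (hc₁ : 0 < c₁)
    (hsep : ∀ i j, i ≠ j → c₁ / max (L i) (L j) < dist (z i) (z j)) :
    ∀ τ : ℝ, 1 < τ →
      μ {ξ : EuclideanSpace ℝ (Fin d) | {i : I | dist ξ (z i) < L i ^ (-τ)}.Infinite} = 0 :=
  extremal_of_weakly_decaying_general K α hα μ hsupp hdecay z L hL c₁ hc₁ hsep
end

section
/- Let Λ ⊆ ℝ^d be a closed set and let S ⊆ Λ be absolute winning on Λ. Let δ > 0 and let K ⊆ Λ be a closed Ahlfors δ-regular set. Then K ∩ S is winning for Schmidt's game on K. -/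
open Metric MeasureTheory

/-- A ball in `ℝ^d`, given by its center and radius. -/
abbrev GBall (d : ℕ) := EuclideanSpace ℝ (Fin d) × ℝ

/-- The closed ball in `ℝ^d` determined by a center–radius pair. -/
def gset {d : ℕ} (B : GBall d) : Set (EuclideanSpace ℝ (Fin d)) :=
  closedBall B.1 B.2

/-- A strategy for Ayesha is causal when its response at time `k` depends only on
Bhupen's moves up to time `k`. -/
def IsCausal {d : ℕ} (σ : (ℕ → GBall d) → ℕ → GBall d) : Prop :=
  ∀ B B' : ℕ → GBall d, ∀ k : ℕ, (∀ i, i ≤ k → B i = B' i) → σ B k = σ B' k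

/-- Legality of Bhupen's moves up to time `k` in Schmidt's `(α,β)`-game on `K`,
given Ayesha's strategy `σ`. -/
def SchmidtLegal {d : ℕ} (K : Set (EuclideanSpace ℝ (Fin d))) (β : ℝ)
    (σ : (ℕ → GBall d) → ℕ → GBall d) (B : ℕ → GBall d) (k : ℕ) : Prop :=
  (B 0).1 ∈ K ∧ 0 < (B 0).2 ∧
    ∀ i, i < k → (B (i + 1)).1 ∈ K ∧ (B (i + 1)).2 = β * (σ B i).2 ∧
      gset (B (i + 1)) ⊆ gset (σ B i)

/-- `σ` is a winning strategy for Ayesha in Schmidt's `(α,β)`-game on `K` with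
target set `S`. -/
def SchmidtWinningStrat {d : ℕ} (K S : Set (EuclideanSpace ℝ (Fin d))) (α β : ℝ)
    (σ : (ℕ → GBall d) → ℕ → GBall d) : Prop :=
  IsCausal σ ∧
    (∀ B k, SchmidtLegal K β σ B k →
      (σ B k).1 ∈ K ∧ (σ B k).2 = α * (B k).2 ∧ gset (σ B k) ⊆ gset (B k)) ∧
    ∀ B : ℕ → GBall d, (∀ k, SchmidtLegal K β σ B k) →
      ∀ x, (∀ k, x ∈ gset (B k)) → x ∈ S

/-- `S` is winning for Schmidt's game on `K`. -/
def WinningOn {d : ℕ} (K S : Set (EuclideanSpace ℝ (Fin d))) : Prop :=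
  ∃ α : ℝ, 0 < α ∧ α < 1 ∧ ∀ β : ℝ, 0 < β → β < 1 →
    ∃ σ, SchmidtWinningStrat K S α β σ

/-- Legality of Bhupen's moves up to time `k` in the absolute `β`-game on `Λ`,
given Ayesha's strategy `σ`: the initial ball is centered in `Λ` with positive
radius, and each subsequent ball `B (i+1)` is centered in `Λ`, has radius `β`
times the radius of Ayesha's deleted ball `σ B i`, and is contained in
`B i ∖ (σ B i)`. -/
def AbsLegal {d : ℕ} (Λ : Set (EuclideanSpace ℝ (Fin d))) (β : ℝ)
    (σ : (ℕ → GBall d) → ℕ → GBall d) (B : ℕ → GBall d) (k : ℕ) : Prop :=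
  (B 0).1 ∈ Λ ∧ 0 < (B 0).2 ∧
    ∀ i, i < k → (B (i + 1)).1 ∈ Λ ∧ (B (i + 1)).2 = β * (σ B i).2 ∧
      gset (B (i + 1)) ⊆ gset (B i) \ gset (σ B i)

/-- `σ` is a winning strategy for Ayesha in the absolute `β`-game on `Λ` with
target set `S`: it is causal, it answers legal histories with legal moves (balls
centered in `Λ` of radius `β` times the radius of Bhupen's ball), and the outcome
of any legal play following it lies in `S` (if Bhupen gets stuck, there is no such
play, so Ayesha wins by convention). -/
def AbsWinningStrat {d : ℕ} (Λ S : Set (EuclideanSpace ℝ (Fin d))) (β : ℝ)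
    (σ : (ℕ → GBall d) → ℕ → GBall d) : Prop :=
  IsCausal σ ∧
    (∀ B k, AbsLegal Λ β σ B k → (σ B k).1 ∈ Λ ∧ (σ B k).2 = β * (B k).2) ∧
    ∀ B : ℕ → GBall d, (∀ k, AbsLegal Λ β σ B k) →
      ∀ x, (∀ k, x ∈ gset (B k)) → x ∈ S

/-- `S` is absolute winning on `Λ`: Ayesha has a winning strategy in the absolute
`β`-game on `Λ` for every `0 < β < 1`. -/
def AbsoluteWinningOn {d : ℕ} (Λ S : Set (EuclideanSpace ℝ (Fin d))) : Prop :=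
  ∀ β : ℝ, 0 < β → β < 1 → ∃ σ, AbsWinningStrat Λ S β σ

/-! Ahlfors regularity makes `K` uniformly perfect: every ball `B(x, s)` with
`x ∈ K` and `s` small contains a point of `K` at distance more than `κ s` from `x`. Of the two
points `x` and `y`, one is far from any given small ball `N`, so every small ball `B` centred in
`K` contains a ball of radius `α · radius B`, centred in `K`, that misses `N`. In Schmidt's
`(α, β)`-game Ayesha therefore waits until Bhupen's balls are small, then plays the absolute
`b`-game with `b² = αβ` on Bhupen's balls, answering each ball `N` deleted by her absolute
strategy with such a subball of Bhupen's current ball. Bhupen's next ball then is a legal move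
of the absolute game, so the outcome lies in `S`, and it lies in `K` because `K` is closed. -/

open Filter Topology

section Ahlfors

variable {X : Type*} [PseudoMetricSpace X]

def AhlforsRegularOn [MeasurableSpace X] (μ : Measure X) (K : Set X) (δ C r₀ : ℝ) : Prop :=
  ∀ x ∈ K, ∀ r : ℝ, 0 < r → r < r₀ →
    ENNReal.ofReal (C⁻¹ * r ^ δ) ≤ μ (closedBall x r) ∧
      μ (closedBall x r) ≤ ENNReal.ofReal (C * r ^ δ)

theorem exists_pos_le_one_mul_rpow_lt (C : ℝ) {δ ε : ℝ} (hδ : 0 < δ) (hε : 0 < ε) :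
    ∃ κ, 0 < κ ∧ κ ≤ 1 ∧ C * κ ^ δ < ε := by
  have hlim : Tendsto (fun κ : ℝ => C * κ ^ δ) (𝓝 0) (𝓝 0) := by
    simpa [Real.zero_rpow hδ.ne'] using
      (Real.continuousAt_rpow_const 0 δ (Or.inr hδ.le)).tendsto.const_mul C
  obtain ⟨κ, hκε, hκ⟩ := ((hlim.mono_left nhdsWithin_le_nhds |>.eventually (gt_mem_nhds hε)).and
    (Ioc_mem_nhdsGT one_pos)).exists
  exact ⟨κ, hκ.1, hκ.2, hκε⟩

/-- Up to a `μ`-null set, `B(x, s)` is not covered by `B(x, κ s)`: their measures are comparable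
to `s ^ δ` and to the much smaller `(κ s) ^ δ`. -/
theorem AhlforsRegularOn.exists_mem_annulus [MeasurableSpace X] {μ : Measure X} {K : Set X}
    {δ C r₀ κ : ℝ} (hreg : AhlforsRegularOn μ K δ C r₀) (hμK : μ Kᶜ = 0) (hC : 0 < C)
    (hκ0 : 0 < κ) (hκ1 : κ ≤ 1) (hκC : C * κ ^ δ < C⁻¹) {x : X} (hx : x ∈ K) {s : ℝ}
    (hs : 0 < s) (hsr : s < r₀) :
    ∃ y ∈ K, κ * s < dist y x ∧ dist y x ≤ s := by
  by_contra! hnone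
  have hcover : closedBall x s ⊆ closedBall x (κ * s) ∪ Kᶜ := by
    intro y hy
    by_cases hyK : y ∈ K
    · exact Or.inl (mem_closedBall.2 (not_lt.1 fun h => (hnone y hyK h).not_ge hy))
    · exact Or.inr hyK
  have hle : μ (closedBall x s) ≤ μ (closedBall x (κ * s)) :=
    calc μ (closedBall x s) ≤ μ (closedBall x (κ * s) ∪ Kᶜ) := measure_mono hcover
      _ ≤ μ (closedBall x (κ * s)) + μ Kᶜ := measure_union_le _ _
      _ = μ (closedBall x (κ * s)) := by rw [hμK, add_zero]
  have hlt : C * (κ * s) ^ δ < C⁻¹ * s ^ δ := by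
    rw [Real.mul_rpow hκ0.le hs.le, ← mul_assoc]
    exact mul_lt_mul_of_pos_right hκC (by positivity)
  have hlow := (hreg x hx s hs hsr).1
  have hup := (hreg x hx (κ * s) (by positivity) (by nlinarith)).2
  exact (hlow.trans (hle.trans hup)).not_gt
    ((ENNReal.ofReal_lt_ofReal_iff (by positivity)).2 hlt)

end Ahlfors

section Avoidance

variable {X : Type*} [PseudoMetricSpace X]

def HasAvoidingSubballs (K : Set X) (α b r₀ : ℝ) : Prop :=
  ∀ x ∈ K, ∀ r, 0 < r → r < r₀ → ∀ z,
    ∃ y ∈ K, closedBall y (α * r) ⊆ closedBall x r \ closedBall z (b * r)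

/-- Two points further than `2 (a + ρ)` apart cannot both be within `a + ρ` of `z`. -/
theorem exists_closedBall_subset_diff_of_pair {x y z : X} {a r ρ : ℝ}
    (hyx : dist y x ≤ r - a) (hfar : 2 * (a + ρ) < dist y x) :
    ∃ w ∈ ({x, y} : Set X), closedBall w a ⊆ closedBall x r \ closedBall z ρ := by
  have hfits : ∀ w, dist w x ≤ r - a → closedBall w a ⊆ closedBall x r := fun w hw =>
    closedBall_subset_closedBall' (by linarith)
  rcases lt_or_ge (a + ρ) (dist x z) with hxz | hxz
  · refine ⟨x, .inl rfl, Set.subset_sdiff.2 ⟨hfits x ?_, closedBall_disjoint_closedBall hxz⟩⟩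
    rw [dist_self]
    linarith [dist_nonneg (x := y) (y := x)]
  · have hyz : a + ρ < dist y z := by linarith [dist_triangle y z x, dist_comm z x]
    exact ⟨y, .inr rfl, Set.subset_sdiff.2 ⟨hfits y hyx, closedBall_disjoint_closedBall hyz⟩⟩

theorem hasAvoidingSubballs_of_mem_annulus {K : Set X} {κ α b r₀ : ℝ}
    (hannulus : ∀ x ∈ K, ∀ s, 0 < s → s < r₀ → ∃ y ∈ K, κ * s < dist y x ∧ dist y x ≤ s)
    (hb : 0 ≤ b) (hαb : 4 * (α + b) ≤ κ) : HasAvoidingSubballs K α b r₀ := by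
  intro x hx r hr hrr₀ z
  obtain ⟨y, hy, hyfar, hynear⟩ := hannulus x hx (r / 2) (by positivity) (by linarith)
  obtain ⟨w, hw, hsub⟩ := exists_closedBall_subset_diff_of_pair (z := z) (a := α * r)
    (ρ := b * r) (r := r) (by nlinarith) (by nlinarith)
  rcases hw with rfl | rfl
  exacts [⟨w, hx, hsub⟩, ⟨w, hy, hsub⟩]

theorem IsClosed.mem_of_forall_mem_closedBall {K : Set X} (hK : IsClosed K) {c : ℕ → X}
    {r : ℕ → ℝ} (hc : ∀ k, c k ∈ K) (hr : Tendsto r atTop (𝓝 0)) {x : X}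
    (hx : ∀ k, x ∈ closedBall (c k) (r k)) : x ∈ K :=
  hK.mem_of_tendsto (tendsto_iff_dist_tendsto_zero.2 <|
    squeeze_zero (fun _ => dist_nonneg) (fun k => by rw [dist_comm]; exact hx k) hr)
    (Eventually.of_forall hc)

end Avoidance

section Game

variable {d : ℕ} {K Λ : Set (EuclideanSpace ℝ (Fin d))} {α β b r₀ : ℝ}

section AvoidingBall

variable {B N : GBall d}

open Classical in
noncomputable def avoidingBall (K : Set (EuclideanSpace ℝ (Fin d))) (α : ℝ) (B N : GBall d) :
    GBall d :=
  if h : ∃ y ∈ K, closedBall y (α * B.2) ⊆ gset B \ gset N then (h.choose, α * B.2)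
  else (B.1, α * B.2)

theorem avoidingBall_snd : (avoidingBall K α B N).2 = α * B.2 := by
  unfold avoidingBall
  split_ifs <;> rfl

theorem avoidingBall_fst_mem (hB : B.1 ∈ K) : (avoidingBall K α B N).1 ∈ K := by
  unfold avoidingBall
  split_ifs with h
  exacts [h.choose_spec.1, hB]

theorem gset_avoidingBall_subset (hα : α ≤ 1) (hB : 0 ≤ B.2) :
    gset (avoidingBall K α B N) ⊆ gset B := by
  unfold avoidingBall
  split_ifs with h
  · exact h.choose_spec.2.trans Set.sdiff_subset
  · exact closedBall_subset_closedBall (mul_le_of_le_one_left hB hα)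

theorem gset_avoidingBall_subset_diff (havoid : HasAvoidingSubballs K α b r₀) (hB : B.1 ∈ K)
    (hr : B.2 ∈ Set.Ioo 0 r₀) (hN : N.2 = b * B.2) :
    gset (avoidingBall K α B N) ⊆ gset B \ gset N := by
  have h : ∃ y ∈ K, closedBall y (α * B.2) ⊆ gset B \ gset N := by
    rw [gset, gset, hN]
    exact havoid B.1 hB B.2 hr.1 hr.2 N.1
  unfold avoidingBall
  rw [dif_pos h]
  exact h.choose_spec.2

end AvoidingBall

variable {σ τ : (ℕ → GBall d) → ℕ → GBall d} {B : ℕ → GBall d} {k : ℕ} {wait : ℝ → ℕ}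

theorem SchmidtLegal.mono (h : SchmidtLegal K β σ B k) {k' : ℕ} (hk : k' ≤ k) :
    SchmidtLegal K β σ B k' :=
  ⟨h.1, h.2.1, fun i hi => h.2.2 i (hi.trans_le hk)⟩

theorem SchmidtLegal.fst_mem (h : SchmidtLegal K β σ B k) {i : ℕ} (hi : i ≤ k) : (B i).1 ∈ K := by
  cases i with
  | zero => exact h.1
  | succ i => exact (h.2.2 i hi).1

theorem SchmidtLegal.snd_eq (hσ : ∀ B i, (σ B i).2 = α * (B i).2)
    (h : SchmidtLegal K β σ B k) {i : ℕ} (hi : i ≤ k) : (B i).2 = (α * β) ^ i * (B 0).2 := by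
  induction i with
  | zero => simp
  | succ i ih =>
    rw [(h.2.2 i hi).2.1, hσ, ih (by omega), pow_succ]
    ring

/-- Before time `wait (B 0).2` any ball would do as the one to avoid: there only the legality of
Ayesha's moves matters. -/
noncomputable def transferStrategy (K : Set (EuclideanSpace ℝ (Fin d))) (α : ℝ)
    (wait : ℝ → ℕ) (τ : (ℕ → GBall d) → ℕ → GBall d) : (ℕ → GBall d) → ℕ → GBall d :=
  fun B k =>
    let n := wait (B 0).2
    avoidingBall K α (B k) (if n ≤ k then τ (fun j => B (n + j)) (k - n) else B k)

theorem transferStrategy_snd : (transferStrategy K α wait τ B k).2 = α * (B k).2 :=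
  avoidingBall_snd (K := K) (N := _)

theorem transferStrategy_wait_add (j : ℕ) :
    transferStrategy K α wait τ B (wait (B 0).2 + j) =
      avoidingBall K α (B (wait (B 0).2 + j)) (τ (fun i => B (wait (B 0).2 + i)) j) := by
  simp [transferStrategy]

theorem isCausal_transferStrategy (hτ : IsCausal τ) :
    IsCausal (transferStrategy K α wait τ) := by
  intro B B' k hBB'
  simp only [transferStrategy, hBB' 0 k.zero_le, hBB' k le_rfl]
  split_ifs
  · rw [hτ _ (fun j => B' (wait (B' 0).2 + j)) _ fun i hi => hBB' _ (by omega)]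
  · rfl

theorem SchmidtLegal.snd_mem_Ioo_of_wait_le (hα : 0 < α) (hβ : 0 < β) (hαβ : α * β ≤ 1)
    (hwait : ∀ r, (α * β) ^ wait r * r < r₀)
    (h : SchmidtLegal K β (transferStrategy K α wait τ) B k) (hk : wait (B 0).2 ≤ k) :
    (B k).2 ∈ Set.Ioo 0 r₀ := by
  have hr := h.2.1
  rw [h.snd_eq (fun _ _ => transferStrategy_snd) le_rfl]
  refine ⟨by positivity, lt_of_le_of_lt ?_ (hwait (B 0).2)⟩
  exact mul_le_mul_of_nonneg_right (pow_le_pow_of_le_one (by positivity) hαβ hk) hr.le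

theorem SchmidtLegal.absLegal_transferStrategy (hα : 0 < α) (hβ : 0 < β) (hαβ : α * β ≤ 1)
    (hwait : ∀ r, (α * β) ^ wait r * r < r₀) (hKΛ : K ⊆ Λ) (hb : b * b = α * β)
    (havoid : HasAvoidingSubballs K α b r₀)
    (hτ : ∀ B k, AbsLegal Λ b τ B k → (τ B k).1 ∈ Λ ∧ (τ B k).2 = b * (B k).2) (j : ℕ)
    (h : SchmidtLegal K β (transferStrategy K α wait τ) B (wait (B 0).2 + j)) :
    AbsLegal Λ b τ (fun i => B (wait (B 0).2 + i)) j := by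
  induction j with
  | zero =>
    exact ⟨hKΛ (h.fst_mem le_rfl), (h.snd_mem_Ioo_of_wait_le hα hβ hαβ hwait le_rfl).1,
      fun i hi => absurd hi (Nat.not_lt_zero i)⟩
  | succ j ih =>
    have hj := ih (h.mono (by omega))
    refine ⟨hj.1, hj.2.1, fun i hi => ?_⟩
    rcases Nat.lt_succ_iff_lt_or_eq.1 hi with hi | rfl
    · exact hj.2.2 i hi
    obtain ⟨hcen, hrad, hsub⟩ := h.2.2 (wait (B 0).2 + i) (by omega)
    rw [transferStrategy_wait_add] at hrad hsub
    have hτi := (hτ _ i hj).2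
    have hlegal := h.mono (k' := wait (B 0).2 + i) (by omega)
    refine ⟨hKΛ hcen, ?_, hsub.trans (gset_avoidingBall_subset_diff havoid
      (hlegal.fst_mem le_rfl) (hlegal.snd_mem_Ioo_of_wait_le hα hβ hαβ hwait (by omega)) hτi)⟩
    show (B (wait (B 0).2 + i + 1)).2 = _
    rw [hrad, avoidingBall_snd, hτi, ← mul_assoc b, hb]
    ring

end Game

theorem exists_schmidtWinningStrat_of_absWinningStrat {d : ℕ}
    {K Λ S : Set (EuclideanSpace ℝ (Fin d))} {α β b r₀ : ℝ} {τ : (ℕ → GBall d) → ℕ → GBall d}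
    (hK : IsClosed K) (hKΛ : K ⊆ Λ) (hα0 : 0 < α) (hα1 : α ≤ 1) (hβ0 : 0 < β) (hβ1 : β < 1)
    (hr₀ : 0 < r₀) (hb : b * b = α * β) (havoid : HasAvoidingSubballs K α b r₀)
    (hτ : AbsWinningStrat Λ S b τ) :
    ∃ σ, SchmidtWinningStrat K (K ∩ S) α β σ := by
  have hαβ : α * β < 1 := by nlinarith
  have hshrink : Tendsto (fun n : ℕ => (α * β) ^ n) atTop (𝓝 0) :=
    tendsto_pow_atTop_nhds_zero_of_lt_one (by positivity) hαβ
  choose wait hwait using fun r : ℝ =>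
    ((hshrink.mul_const r).eventually (gt_mem_nhds (by simpa using hr₀))).exists
  have hsnd : ∀ B k, (transferStrategy K α wait τ B k).2 = α * (B k).2 :=
    fun _ _ => transferStrategy_snd
  refine ⟨transferStrategy K α wait τ, isCausal_transferStrategy hτ.1, fun B k h => ?_,
    fun B h x hx => ?_⟩
  · have hr : 0 ≤ (B k).2 := by
      rw [h.snd_eq hsnd le_rfl]
      exact mul_nonneg (by positivity) h.2.1.le
    exact ⟨avoidingBall_fst_mem (h.fst_mem le_rfl), hsnd B k, gset_avoidingBall_subset hα1 hr⟩
  · have habs (j : ℕ) := (h _).absLegal_transferStrategy hα0 hβ0 hαβ.le hwait hKΛ hb havoid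
      hτ.2.1 j
    refine ⟨hK.mem_of_forall_mem_closedBall (fun k => (h k).fst_mem le_rfl) ?_ hx,
      hτ.2.2 _ habs x fun j => hx _⟩
    simpa only [zero_mul] using (hshrink.mul_const (B 0).2).congr fun k =>
      ((h k).snd_eq hsnd le_rfl).symm

theorem winning_on_of_absolute_winning_general {d : ℕ}
    (Λ : Set (EuclideanSpace ℝ (Fin d)))
    (S : Set (EuclideanSpace ℝ (Fin d)))
    (hwin : AbsoluteWinningOn Λ S)
    (δ : ℝ) (hδ : 0 < δ)
    (K : Set (EuclideanSpace ℝ (Fin d))) (hKΛ : K ⊆ Λ) (hK : IsClosed K)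
    (hreg : ∃ μ : Measure (EuclideanSpace ℝ (Fin d)), μ Kᶜ = 0 ∧
      ∃ C > (0:ℝ), ∃ r₀ > (0:ℝ), ∀ x ∈ K, ∀ r : ℝ, 0 < r → r < r₀ →
        ENNReal.ofReal (C⁻¹ * r ^ δ) ≤ μ (closedBall x r) ∧
        μ (closedBall x r) ≤ ENNReal.ofReal (C * r ^ δ)) :
    WinningOn K (K ∩ S) := by
  obtain ⟨μ, hμK, C, hC, r₀, hr₀, hreg⟩ := hreg
  obtain ⟨κ, hκ0, hκ1, hκC⟩ := exists_pos_le_one_mul_rpow_lt C hδ (inv_pos.2 hC)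
  -- `α = (κ/8)²` makes `4 (α + √(αβ)) ≤ κ` for every `β < 1`.
  refine ⟨(κ / 8) ^ 2, by positivity, by nlinarith, fun β hβ0 hβ1 => ?_⟩
  set b := √((κ / 8) ^ 2 * β)
  have hb : b ≤ κ / 8 := Real.sqrt_le_iff.2 ⟨by positivity, by nlinarith⟩
  obtain ⟨τ, hτ⟩ := hwin b (Real.sqrt_pos.2 (by positivity)) (by linarith)
  exact exists_schmidtWinningStrat_of_absWinningStrat hK hKΛ (by positivity) (by nlinarith) hβ0
    hβ1 hr₀ (Real.mul_self_sqrt (by positivity))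
    (hasAvoidingSubballs_of_mem_annulus
      (fun x hx s hs hsr => AhlforsRegularOn.exists_mem_annulus hreg hμK hC hκ0 hκ1 hκC hx hs hsr)
      (by positivity) (by nlinarith)) hτ

/-- Broderick–Fishman–Kleinbock–Reich–Weiss: if `S` is absolute
winning on a closed set `Λ` and `K ⊆ Λ` is a closed Ahlfors δ-regular set, then
`K ∩ S` is winning for Schmidt's game on `K`. -/
theorem winning_on_of_absolute_winning {d : ℕ}
    (Λ : Set (EuclideanSpace ℝ (Fin d))) (hΛ : IsClosed Λ)
    (S : Set (EuclideanSpace ℝ (Fin d))) (hS : S ⊆ Λ)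
    (hwin : AbsoluteWinningOn Λ S)
    (δ : ℝ) (hδ : 0 < δ)
    (K : Set (EuclideanSpace ℝ (Fin d))) (hKΛ : K ⊆ Λ) (hK : IsClosed K)
    (hreg : ∃ μ : Measure (EuclideanSpace ℝ (Fin d)), μ Kᶜ = 0 ∧
      ∃ C > (0:ℝ), ∃ r₀ > (0:ℝ), ∀ x ∈ K, ∀ r : ℝ, 0 < r → r < r₀ →
        ENNReal.ofReal (C⁻¹ * r ^ δ) ≤ μ (closedBall x r) ∧
        μ (closedBall x r) ≤ ENNReal.ofReal (C * r ^ δ)) :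
    WinningOn K (K ∩ S) :=
  winning_on_of_absolute_winning_general Λ S hwin δ hδ K hKΛ hK hreg
end

section
/- Let Λ ⊆ ℝ^d be a closed set, I a countable index set, z : I → Λ a family of points of Λ, and L : I → [1,∞) weights, and suppose there is c₁ > 0 such that |z_i − z_j| > c₁/max(L_i, L_j) whenever z_i ≠ z_j. Then the set Bad := {ξ ∈ Λ : there exists c > 0 such that |ξ − z_i| > c/L_i for all i ∈ I} is absolute winning on Λ. -/
open Metric

/-!
Ayesha plays the following strategy. When Bhupen's ball has center `x` and radius `r`, call a
point `zᵢ` a threat if `|zᵢ - x| ≤ 2r` and `4r < c₁ / Lᵢ`; by the separation hypothesis all threats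
coincide, so Ayesha can delete the ball of radius `βr` around the threat, if there is one. Given
`i`, look at the first stage `k` at which `4 rₖ < c₁ / Lᵢ`. Either `zᵢ` was a threat at stage `k`,
and the outcome avoids the deleted ball around it, or it lies farther than `2 rₖ` from the center,
hence farther than `rₖ` from the outcome. Either way the outcome is `β rₖ`-far from `zᵢ`, and the
minimality of `k` makes `β rₖ` comparable to `c₁ / Lᵢ`, since the radii shrink by `β²` per round.
-/

theorem exists_pow_mul_lt_and_min_le {q r ρ : ℝ} (hq0 : 0 < q) (hq1 : q < 1) (hr : 0 < r)
    (hρ : 0 < ρ) : ∃ k : ℕ, q ^ k * r < ρ ∧ min (q * ρ) r ≤ q ^ k * r := by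
  by_cases hρr : r < ρ
  · exact ⟨0, by simpa using hρr, by simp⟩
  obtain ⟨n, hlt, hle⟩ :=
    exists_nat_pow_near_of_lt_one (div_pos hρ hr) ((div_le_one hr).2 (not_lt.1 hρr)) hq0 hq1
  refine ⟨n + 1, (lt_div_iff₀ hr).1 hlt, min_le_of_left_le ?_⟩
  calc q * ρ ≤ q * (q ^ n * r) := by gcongr; exact (div_le_iff₀ hr).1 hle
    _ = q ^ (n + 1) * r := by ring

section Play

variable {d : ℕ} {Λ : Set (EuclideanSpace ℝ (Fin d))} {β : ℝ}
  {σ : (ℕ → GBall d) → ℕ → GBall d} {B : ℕ → GBall d}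

theorem center_mem_of_absLegal {k : ℕ} (hB : AbsLegal Λ β σ B k) : (B k).1 ∈ Λ := by
  cases k with
  | zero => exact hB.1
  | succ k => exact (hB.2.2 k k.lt_succ_self).1

theorem radius_eq_of_absLegal (hB : ∀ k, AbsLegal Λ β σ B k)
    (hσ : ∀ k, (σ B k).2 = β * (B k).2) (k : ℕ) : (B k).2 = (β ^ 2) ^ k * (B 0).2 := by
  induction k with
  | zero => simp
  | succ k ih => rw [((hB (k + 1)).2.2 k k.lt_succ_self).2.1, hσ, ih]; ring

theorem not_mem_of_absLegal (hB : ∀ k, AbsLegal Λ β σ B k)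
    {x : EuclideanSpace ℝ (Fin d)} (hx : ∀ k, x ∈ gset (B k)) (k : ℕ) : x ∉ gset (σ B k) :=
  (((hB (k + 1)).2.2 k k.lt_succ_self).2.2 (hx (k + 1))).2

theorem mem_of_absLegal (hΛ : IsClosed Λ) (hβ0 : 0 < β) (hβ1 : β < 1)
    (hB : ∀ k, AbsLegal Λ β σ B k) (hσ : ∀ k, (σ B k).2 = β * (B k).2)
    {x : EuclideanSpace ℝ (Fin d)} (hx : ∀ k, x ∈ gset (B k)) : x ∈ Λ := by
  refine hΛ.closure_subset (Metric.mem_closure_iff.2 fun ε hε => ?_)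
  have hr0 : 0 < (B 0).2 := (hB 0).2.1
  obtain ⟨k, hk⟩ := exists_pow_lt_of_lt_one (div_pos hε hr0) (by nlinarith : β ^ 2 < 1)
  refine ⟨(B k).1, center_mem_of_absLegal (hB k), ?_⟩
  calc dist x (B k).1 ≤ (B k).2 := hx k
    _ = (β ^ 2) ^ k * (B 0).2 := radius_eq_of_absLegal hB hσ k
    _ < ε := (lt_div_iff₀ hr0).1 hk

end Play

section Threat

variable {d : ℕ} {I : Type*} (z : I → EuclideanSpace ℝ (Fin d)) (L : I → ℝ) (c₁ β : ℝ)

def IsThreat (B : GBall d) (i : I) : Prop :=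
  dist (z i) B.1 ≤ 2 * B.2 ∧ 4 * B.2 < c₁ / L i

open scoped Classical in
noncomputable def threatResponse (B : GBall d) : GBall d :=
  if h : ∃ i, IsThreat z L c₁ B i then (z h.choose, β * B.2) else (B.1, β * B.2)

variable {z L c₁ β}

theorem threatResponse_snd (B : GBall d) : (threatResponse z L c₁ β B).2 = β * B.2 := by
  unfold threatResponse; split <;> rfl

theorem threatResponse_fst_mem {Λ : Set (EuclideanSpace ℝ (Fin d))} (hz : ∀ i, z i ∈ Λ)
    {B : GBall d} (hB : B.1 ∈ Λ) : (threatResponse z L c₁ β B).1 ∈ Λ := by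
  unfold threatResponse; split
  · exact hz _
  · exact hB

theorem IsThreat.eq (hsep : ∀ i j, z i ≠ z j → c₁ / max (L i) (L j) < dist (z i) (z j))
    {B : GBall d} {i j : I} (hi : IsThreat z L c₁ B i) (hj : IsThreat z L c₁ B j) :
    z i = z j := by
  by_contra hne
  have hij : dist (z i) (z j) ≤ 4 * B.2 := by
    linarith [dist_triangle_right (z i) (z j) B.1, hi.1, hj.1]
  have := hsep i j hne
  rcases max_choice (L i) (L j) with h | h <;> rw [h] at this <;> linarith [hi.2, hj.2]

theorem IsThreat.threatResponse_fst
    (hsep : ∀ i j, z i ≠ z j → c₁ / max (L i) (L j) < dist (z i) (z j))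
    {B : GBall d} {i : I} (hi : IsThreat z L c₁ B i) : (threatResponse z L c₁ β B).1 = z i := by
  have h : ∃ j, IsThreat z L c₁ B j := ⟨i, hi⟩
  rw [threatResponse, dif_pos h]
  exact h.choose_spec.eq hsep hi

theorem lt_dist_of_not_mem_threatResponse
    (hsep : ∀ i j, z i ≠ z j → c₁ / max (L i) (L j) < dist (z i) (z j)) (hβ1 : β < 1)
    {B : GBall d} {i : I} (hi : 4 * B.2 < c₁ / L i) {x : EuclideanSpace ℝ (Fin d)}
    (hx : x ∈ gset B) (hxA : x ∉ gset (threatResponse z L c₁ β B)) :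
    β * B.2 < dist x (z i) := by
  have hxB : dist x B.1 ≤ B.2 := hx
  by_cases hnear : dist (z i) B.1 ≤ 2 * B.2
  · have hA : threatResponse z L c₁ β B = (z i, β * B.2) :=
      Prod.ext (IsThreat.threatResponse_fst hsep ⟨hnear, hi⟩) (threatResponse_snd B)
    rw [hA] at hxA
    simpa [gset] using hxA
  · have hr : 0 ≤ B.2 := dist_nonneg.trans hxB
    nlinarith [dist_triangle_left (z i) B.1 x]

end Threat

theorem bad_absolute_winning_general {d : ℕ} {I : Type*}
    (Λ : Set (EuclideanSpace ℝ (Fin d))) (hΛ : IsClosed Λ)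
    (z : I → EuclideanSpace ℝ (Fin d)) (hz : ∀ i, z i ∈ Λ)
    (L : I → ℝ) (hL : ∀ i, 1 ≤ L i)
    (c₁ : ℝ) (hc₁ : 0 < c₁)
    (hsep : ∀ i j, z i ≠ z j → c₁ / max (L i) (L j) < dist (z i) (z j)) :
    AbsoluteWinningOn Λ {ξ ∈ Λ | ∃ c > (0:ℝ), ∀ i : I, c / L i < dist ξ (z i)} := by
  intro β hβ0 hβ1
  let σ : (ℕ → GBall d) → ℕ → GBall d := fun B k => threatResponse z L c₁ β (B k)
  have hσ : ∀ B k, (σ B k).2 = β * (B k).2 := fun B k => threatResponse_snd (B k)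
  refine ⟨σ, fun B B' k h => by simp only [σ, h k le_rfl],
    fun B k hB => ⟨threatResponse_fst_mem hz (center_mem_of_absLegal hB), hσ B k⟩, ?_⟩
  intro B hB x hx
  have hr0 : 0 < (B 0).2 := (hB 0).2.1
  refine ⟨mem_of_absLegal hΛ hβ0 hβ1 hB (hσ B) hx,
    β * min (β ^ 2 * c₁ / 4) (B 0).2, by positivity, fun i => ?_⟩
  have hLi : 0 < L i := one_pos.trans_le (hL i)
  obtain ⟨k, hk, hmin⟩ := exists_pow_mul_lt_and_min_le (pow_pos hβ0 2) (by nlinarith) hr0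
    (by positivity : 0 < c₁ / L i / 4)
  rw [← radius_eq_of_absLegal hB (hσ B) k] at hk hmin
  calc β * min (β ^ 2 * c₁ / 4) (B 0).2 / L i
      = β * min (β ^ 2 * (c₁ / L i / 4)) ((B 0).2 / L i) := by
        rw [mul_div_assoc, ← min_div_div_right hLi.le]; congr 2; ring
    _ ≤ β * (B k).2 := by gcongr; exact (min_le_min_left _ (div_le_self hr0.le (hL i))).trans hmin
    _ < dist x (z i) := lt_dist_of_not_mem_threatResponse hsep hβ1 (by linarith) (hx k)
        (not_mem_of_absLegal hB hx k)

/-- after Mayeda–Merrill: for a separated family of points of a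
closed set `Λ`, the set of badly approximable points is absolute winning on `Λ`. -/
theorem bad_absolute_winning {d : ℕ} {I : Type*} [Countable I]
    (Λ : Set (EuclideanSpace ℝ (Fin d))) (hΛ : IsClosed Λ)
    (z : I → EuclideanSpace ℝ (Fin d)) (hz : ∀ i, z i ∈ Λ)
    (L : I → ℝ) (hL : ∀ i, 1 ≤ L i)
    (c₁ : ℝ) (hc₁ : 0 < c₁)
    (hsep : ∀ i j, z i ≠ z j → c₁ / max (L i) (L j) < dist (z i) (z j)) :
    AbsoluteWinningOn Λ {ξ ∈ Λ | ∃ c > (0:ℝ), ∀ i : I, c / L i < dist ξ (z i)} :=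
  bad_absolute_winning_general Λ hΛ z hz L hL c₁ hc₁ hsep
end
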